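/- Let Z be a type, d ≥ 1, and ℓ : ℝ^d → Z → Z → ℝ a pairwise loss such that for every z, z' ∈ Z the map w ↦ ℓ(w, z, z') is convex, differentiable with β-Lipschitz gradient (β > 0), and ‖∇ℓ(w, z, z')‖ ≤ L for all w. Let S, S' : Fin n → Z be neighboring samples (n ≥ 2), let step sizes satisfy 0 ≤ α_t ≤ 2/β for all t, and for each path ξ : Fin T → Fin n let w_T(ξ) and w'_T(ξ) denote the SGD iterates for pairwise learning at step T based on S and S' respectively. Then, under the random selection rule, for all z, z' ∈ Z: (1/n^T)·Σ_{ξ : Fin T → Fin n} |ℓ(w_T(ξ), z, z') − ℓ(w'_T(ξ), z, z')| ≤ (4L²/n)·Σ_{t=1}^{T−1} α_t. -/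

import Mathlib

/-!
Co-coercivity of the gradient of a convex `β`-smooth function,
`‖∇f u - ∇f v‖² ≤ β ⟪∇f u - ∇f v, u - v⟫`, makes the gradient step `w ↦ w - c ∇f w` non-expansive
for `0 ≤ c ≤ 2 / β`. In the pairwise update built from `S` and `S'`, each summand that avoids the
index `i₀` where the samples differ is such a step for a common loss, and every other summand moves
the two iterates apart by at most `2 L α_t`. Averaged over paths, the current index and each earlier
one equal `i₀` with probability `1 / n`, so `E ‖w_{t+1} - w'_{t+1}‖ ≤ E ‖w_t - w'_t‖ + 4 L α_t / n`.
Summing over `t` and using that the loss is `L`-Lipschitz gives the bound.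
-/

open Set InnerProductSpace
open scoped RealInnerProductSpace

section GradientInequalities

variable {E : Type*} [NormedAddCommGroup E] [InnerProductSpace ℝ E] [CompleteSpace E]
  {f : E → ℝ} {g : E → E} {f' x : E} {β : ℝ}

theorem HasGradientAt.hasDerivAt_add_smul {d : E} {t : ℝ} (h : HasGradientAt f f' (x + t • d)) :
    HasDerivAt (fun s : ℝ => f (x + s • d)) ⟪f', d⟫ t := by
  have hline : HasDerivAt (fun s : ℝ => x + s • d) d t := by
    simpa using ((hasDerivAt_id t).smul_const d).const_add x
  exact (h.hasFDerivAt.comp_hasDerivAt t hline).congr_deriv (by simp)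

theorem ConvexOn.add_inner_le_of_hasGradientAt (hf : ConvexOn ℝ univ f)
    (h : HasGradientAt f f' x) (y : E) : f x + ⟪f', y - x⟫ ≤ f y := by
  have hline : ConvexOn ℝ univ fun t : ℝ => f (x + t • (y - x)) := by
    simpa [Function.comp_def, AffineMap.lineMap_apply, add_comm]
      using hf.comp_affineMap (AffineMap.lineMap x y)
  have hderiv := HasGradientAt.hasDerivAt_add_smul (d := y - x) (t := 0) (by simpa using h)
  have hslope := hline.le_slope_of_hasDerivAt (mem_univ 0) (mem_univ 1) one_pos hderiv
  simp only [slope_def_field, one_smul, zero_smul, add_zero, add_sub_cancel] at hslope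
  linarith

theorem le_add_inner_add_of_lipschitz_gradient (hg : ∀ v, HasGradientAt f (g v) v)
    (hsm : ∀ u v, ‖g u - g v‖ ≤ β * ‖u - v‖) (x y : E) :
    f y ≤ f x + ⟪g x, y - x⟫ + β / 2 * ‖y - x‖ ^ 2 := by
  set d := y - x
  have hφ : ∀ t : ℝ, HasDerivAt (fun t : ℝ => f (x + t • d)) ⟪g (x + t • d), d⟫ t :=
    fun t => (hg _).hasDerivAt_add_smul
  have hB : ∀ t : ℝ, HasDerivAt (fun t : ℝ => f x + t * ⟪g x, d⟫ + β / 2 * t ^ 2 * ‖d‖ ^ 2)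
      (⟪g x, d⟫ + β * t * ‖d‖ ^ 2) t := by
    intro t
    refine ((((hasDerivAt_id t).mul_const ⟪g x, d⟫).const_add (f x)).add
      (((hasDerivAt_pow 2 t).const_mul (β / 2)).mul_const (‖d‖ ^ 2))).congr_deriv ?_
    ring
  have hderiv_le : ∀ t ∈ Ico (0 : ℝ) 1, ⟪g (x + t • d), d⟫ ≤ ⟪g x, d⟫ + β * t * ‖d‖ ^ 2 := by
    intro t ht
    have hgrad : ‖g (x + t • d) - g x‖ ≤ β * t * ‖d‖ := by
      simpa [norm_smul, abs_of_nonneg ht.1, mul_assoc] using hsm (x + t • d) x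
    calc ⟪g (x + t • d), d⟫ = ⟪g x, d⟫ + ⟪g (x + t • d) - g x, d⟫ := by
          rw [inner_sub_left]; ring
      _ ≤ ⟪g x, d⟫ + ‖g (x + t • d) - g x‖ * ‖d‖ := by gcongr; exact real_inner_le_norm _ _
      _ ≤ ⟪g x, d⟫ + β * t * ‖d‖ ^ 2 := by
          rw [sq, ← mul_assoc]; gcongr
  have key := image_le_of_deriv_right_le_deriv_boundary (a := 0) (b := 1)
    (fun t _ => (hφ t).continuousAt.continuousWithinAt) (fun t _ => (hφ t).hasDerivWithinAt)
    (by simp) (fun t _ => (hB t).continuousAt.continuousWithinAt)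
    (fun t _ => (hB t).hasDerivWithinAt) hderiv_le (right_mem_Icc.2 zero_le_one)
  simpa only [d, one_smul, add_sub_cancel, one_mul, one_pow, mul_one] using key

theorem ConvexOn.add_inner_add_sq_norm_sub_le (hβ : 0 < β) (hf : ConvexOn ℝ univ f)
    (hg : ∀ v, HasGradientAt f (g v) v) (hsm : ∀ u v, ‖g u - g v‖ ≤ β * ‖u - v‖) (a b : E) :
    f a + ⟪g a, b - a⟫ + ‖g b - g a‖ ^ 2 / (2 * β) ≤ f b := by
  -- bound `f y` below by convexity at `a` and above by the descent lemma at `b`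
  set y := b - β⁻¹ • (g b - g a)
  have ha := hf.add_inner_le_of_hasGradientAt (hg a) y
  have hb := le_add_inner_add_of_lipschitz_gradient hg hsm b y
  have hya : ⟪g a, y - a⟫ = ⟪g a, b - a⟫ - β⁻¹ * ⟪g a, g b - g a⟫ := by
    rw [show y - a = (b - a) - β⁻¹ • (g b - g a) by simp only [y]; abel, inner_sub_right,
      real_inner_smul_right]
  have hyb : ⟪g b, y - b⟫ = -(β⁻¹ * ⟪g b, g b - g a⟫) := by
    rw [show y - b = -(β⁻¹ • (g b - g a)) by simp only [y]; abel, inner_neg_right,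
      real_inner_smul_right]
  have hnorm : β / 2 * ‖y - b‖ ^ 2 = ‖g b - g a‖ ^ 2 / (2 * β) := by
    rw [show y - b = -(β⁻¹ • (g b - g a)) by simp only [y]; abel, norm_neg, norm_smul,
      norm_inv, Real.norm_of_nonneg hβ.le]
    field_simp
  have hsq : β⁻¹ * ⟪g b, g b - g a⟫ - β⁻¹ * ⟪g a, g b - g a⟫ = β⁻¹ * ‖g b - g a‖ ^ 2 := by
    rw [← mul_sub, ← inner_sub_left, real_inner_self_eq_norm_sq]
  have hhalf : ‖g b - g a‖ ^ 2 / (2 * β) = β⁻¹ * ‖g b - g a‖ ^ 2 / 2 := by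
    field_simp
  rw [hya] at ha
  rw [hyb, hnorm] at hb
  linarith

theorem ConvexOn.sq_norm_sub_le_inner_of_lipschitz_gradient (hβ : 0 < β)
    (hf : ConvexOn ℝ univ f) (hg : ∀ v, HasGradientAt f (g v) v)
    (hsm : ∀ u v, ‖g u - g v‖ ≤ β * ‖u - v‖) (u v : E) :
    ‖g u - g v‖ ^ 2 ≤ β * ⟪g u - g v, u - v⟫ := by
  have huv := hf.add_inner_add_sq_norm_sub_le hβ hg hsm u v
  have hvu := hf.add_inner_add_sq_norm_sub_le hβ hg hsm v u
  have hinner : ⟪g u, v - u⟫ + ⟪g v, u - v⟫ = -⟪g u - g v, u - v⟫ := by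
    rw [inner_sub_left, ← neg_sub u v, inner_neg_right]; ring
  rw [norm_sub_rev (g v)] at huv
  have hhalf : ‖g u - g v‖ ^ 2 / β = 2 * (‖g u - g v‖ ^ 2 / (2 * β)) := by
    field_simp
  rw [← div_le_iff₀' hβ]
  linarith

theorem ConvexOn.norm_sub_smul_gradient_sub_le (hβ : 0 < β) (hf : ConvexOn ℝ univ f)
    (hg : ∀ v, HasGradientAt f (g v) v) (hsm : ∀ u v, ‖g u - g v‖ ≤ β * ‖u - v‖)
    {c : ℝ} (hc₀ : 0 ≤ c) (hc : c ≤ 2 / β) (a b : E) :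
    ‖(a - c • g a) - (b - c • g b)‖ ≤ ‖a - b‖ := by
  have hco := hf.sq_norm_sub_le_inner_of_lipschitz_gradient hβ hg hsm a b
  have hinner : 0 ≤ ⟪g a - g b, a - b⟫ :=
    nonneg_of_mul_nonneg_right ((sq_nonneg _).trans hco) hβ
  have hcβ : c * β ≤ 2 := (le_div_iff₀ hβ).1 hc
  rw [← sq_le_sq₀ (norm_nonneg _) (norm_nonneg _),
    show (a - c • g a) - (b - c • g b) = (a - b) - c • (g a - g b) by module, norm_sub_sq_real,
    real_inner_smul_right, norm_smul, Real.norm_of_nonneg hc₀, real_inner_comm]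
  nlinarith [mul_le_mul_of_nonneg_left hco (sq_nonneg c),
    mul_le_mul_of_nonneg_right hcβ (mul_nonneg hc₀ hinner)]

theorem abs_sub_le_of_norm_gradient_le (hg : ∀ v, HasGradientAt f (g v) v) {L : ℝ}
    (hL : ∀ v, ‖g v‖ ≤ L) (a b : E) : |f a - f b| ≤ L * ‖a - b‖ := by
  simpa [Real.norm_eq_abs] using convex_univ.norm_image_sub_le_of_norm_hasFDerivWithin_le
    (f' := fun v => toDual ℝ E (g v)) (fun v _ => (hg v).hasFDerivAt.hasFDerivWithinAt)
    (fun v _ => by simpa using hL v) (mem_univ b) (mem_univ a)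

end GradientInequalities

theorem sum_ite_apply_eq {ι κ : Type*} [Fintype ι] [DecidableEq ι] [Fintype κ] [DecidableEq κ]
    (p : ι) (b : κ) :
    ∑ ξ : ι → κ, (if ξ p = b then 1 else 0 : ℝ) = Fintype.card κ ^ (Fintype.card ι - 1) := by
  rw [← Equiv.sum_comp (Equiv.funSplitAt p κ).symm, Fintype.sum_prod_type]
  simp [Finset.sum_ite_eq', Fintype.card_subtype_compl]

theorem le_add_sum_Icc_of_le_add {a b : ℕ → ℝ} {s : ℕ} (hs : 1 ≤ s)
    (hstep : ∀ k, 1 ≤ k → k < s → a (k + 1) ≤ a k + b k) :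
    a s ≤ a 1 + ∑ t ∈ Finset.Icc 1 (s - 1), b t := by
  induction s, hs using Nat.le_induction with
  | base => simp
  | succ s hs ih =>
    rw [Nat.add_sub_cancel, ← Nat.sub_add_cancel hs, Finset.sum_Icc_succ_top (by omega),
      Nat.sub_add_cancel hs]
    linarith [hstep s hs (by omega), ih fun k hk hks => hstep k hk (by omega)]

section PairwiseSGD

variable {E Z : Type*} [NormedAddCommGroup E] [InnerProductSpace ℝ E]
  {ℓ : E → Z → Z → ℝ} {g : E → Z → Z → E} {β L c : ℝ}

/-- With `m = t`, `z = S ξ_{t+1}` and `zs = S ∘ ξ` restricted to the first `t` indices, this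
maps `w_t` to `w_{t+1}`. -/
noncomputable def pairwiseSgdStep (g : E → Z → Z → E) (c : ℝ) (z : Z) {m : ℕ} (zs : Fin m → Z)
    (w : E) : E :=
  w - (c / m) • ∑ j, g w z (zs j)

theorem pairwiseSgdStep_sub_pairwiseSgdStep {m : ℕ} (hm : m ≠ 0) (z z' : Z)
    (zs zs' : Fin m → Z) (a b : E) :
    pairwiseSgdStep g c z zs a - pairwiseSgdStep g c z' zs' b =
      (m : ℝ)⁻¹ • ∑ j, ((a - c • g a z (zs j)) - (b - c • g b z' (zs' j))) := by
  have hm' : (m : ℝ) ≠ 0 := Nat.cast_ne_zero.2 hm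
  simp only [pairwiseSgdStep, Finset.sum_sub_distrib, Finset.sum_const, Finset.card_univ,
    Fintype.card_fin, ← Finset.smul_sum, ← Nat.cast_smul_eq_nsmul ℝ]
  match_scalars <;> field_simp

theorem norm_sub_smul_sub_sub_smul_le [CompleteSpace E] [DecidableEq Z] (hβ : 0 < β)
    (hconv : ∀ z z' : Z, ConvexOn ℝ univ fun u => ℓ u z z')
    (hdiff : ∀ (v : E) (z z' : Z), HasGradientAt (fun u => ℓ u z z') (g v z z') v)
    (hsmooth : ∀ (z z' : Z) (u v : E), ‖g u z z' - g v z z'‖ ≤ β * ‖u - v‖)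
    (hL : ∀ (v : E) (z z' : Z), ‖g v z z'‖ ≤ L) (hc₀ : 0 ≤ c) (hc : c ≤ 2 / β)
    (z₁ z₂ z₁' z₂' : Z) (a b : E) :
    ‖(a - c • g a z₁ z₂) - (b - c • g b z₁' z₂')‖ ≤
      ‖a - b‖ + 2 * L * c * (if z₁ = z₁' ∧ z₂ = z₂' then 0 else 1) := by
  split_ifs with h
  · obtain ⟨rfl, rfl⟩ := h
    simpa using (hconv z₁ z₂).norm_sub_smul_gradient_sub_le hβ (fun v => hdiff v z₁ z₂)
      (hsmooth z₁ z₂) hc₀ hc a b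
  · calc ‖(a - c • g a z₁ z₂) - (b - c • g b z₁' z₂')‖
        = ‖(a - b) - c • (g a z₁ z₂ - g b z₁' z₂')‖ := by congr 1; module
      _ ≤ ‖a - b‖ + c * (‖g a z₁ z₂‖ + ‖g b z₁' z₂'‖) := by
        refine (norm_sub_le _ _).trans ?_
        rw [norm_smul, Real.norm_of_nonneg hc₀]
        gcongr
        exact norm_sub_le _ _
      _ ≤ ‖a - b‖ + 2 * L * c * 1 := by
        grw [hL a, hL b]; linarith

theorem norm_pairwiseSgdStep_sub_le [CompleteSpace E] [DecidableEq Z] (hβ : 0 < β)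
    (hconv : ∀ z z' : Z, ConvexOn ℝ univ fun u => ℓ u z z')
    (hdiff : ∀ (v : E) (z z' : Z), HasGradientAt (fun u => ℓ u z z') (g v z z') v)
    (hsmooth : ∀ (z z' : Z) (u v : E), ‖g u z z' - g v z z'‖ ≤ β * ‖u - v‖)
    (hL : ∀ (v : E) (z z' : Z), ‖g v z z'‖ ≤ L) (hc₀ : 0 ≤ c) (hc : c ≤ 2 / β)
    {m : ℕ} (hm : m ≠ 0) (z z' : Z) (zs zs' : Fin m → Z) (a b : E) :
    ‖pairwiseSgdStep g c z zs a - pairwiseSgdStep g c z' zs' b‖ ≤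
      ‖a - b‖ + 2 * L * c / m * ∑ j, (if z = z' ∧ zs j = zs' j then 0 else 1 : ℝ) := by
  rw [pairwiseSgdStep_sub_pairwiseSgdStep hm, norm_smul, norm_inv, Real.norm_natCast]
  calc (m : ℝ)⁻¹ * ‖∑ j, ((a - c • g a z (zs j)) - (b - c • g b z' (zs' j)))‖
      ≤ (m : ℝ)⁻¹ * ∑ j, (‖a - b‖ + 2 * L * c * (if z = z' ∧ zs j = zs' j then 0 else 1)) := by
        gcongr
        exact (norm_sum_le _ _).trans (Finset.sum_le_sum fun j _ =>
          norm_sub_smul_sub_sub_smul_le hβ hconv hdiff hsmooth hL hc₀ hc _ _ _ _ a b)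
    _ = _ := by
        have hm' : (m : ℝ) ≠ 0 := Nat.cast_ne_zero.2 hm
        rw [Finset.sum_add_distrib, Finset.sum_const, Finset.card_univ, Fintype.card_fin,
          nsmul_eq_mul, ← Finset.mul_sum]
        field_simp

theorem ite_and_le_ite_add_ite [DecidableEq Z] {n : ℕ} {S S' : Fin n → Z} {i₀ : Fin n}
    (hSS' : ∀ i, i ≠ i₀ → S i = S' i) (p q : Fin n) :
    (if S p = S' p ∧ S q = S' q then 0 else 1 : ℝ) ≤
      (if p = i₀ then 1 else 0) + (if q = i₀ then 1 else 0) := by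
  split_ifs <;> simp_all

theorem sum_norm_pairwiseSgdStep_sub_le [CompleteSpace E] (hβ : 0 < β)
    (hconv : ∀ z z' : Z, ConvexOn ℝ univ fun u => ℓ u z z')
    (hdiff : ∀ (v : E) (z z' : Z), HasGradientAt (fun u => ℓ u z z') (g v z z') v)
    (hsmooth : ∀ (z z' : Z) (u v : E), ‖g u z z' - g v z z'‖ ≤ β * ‖u - v‖)
    (hL : ∀ (v : E) (z z' : Z), ‖g v z z'‖ ≤ L) (hc₀ : 0 ≤ c) (hc : c ≤ 2 / β)
    {n T k : ℕ} (hk : k ≠ 0) (hkT : k < T) {S S' : Fin n → Z} {i₀ : Fin n}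
    (hSS' : ∀ i, i ≠ i₀ → S i = S' i) (a b : (Fin T → Fin n) → E) :
    ∑ ξ : Fin T → Fin n,
        ‖pairwiseSgdStep g c (S (ξ ⟨k, hkT⟩)) (S ∘ ξ ∘ Fin.castLE hkT.le) (a ξ) -
          pairwiseSgdStep g c (S' (ξ ⟨k, hkT⟩)) (S' ∘ ξ ∘ Fin.castLE hkT.le) (b ξ)‖ ≤
      ∑ ξ, ‖a ξ - b ξ‖ + 4 * L * c * n ^ (T - 1) := by
  classical
  have hL₀ : 0 ≤ L := (norm_nonneg _).trans (hL 0 (S i₀) (S i₀))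
  have hcount : ∑ ξ : Fin T → Fin n, ∑ j : Fin k,
      ((if ξ ⟨k, hkT⟩ = i₀ then 1 else 0) +
        (if ξ (Fin.castLE hkT.le j) = i₀ then 1 else 0) : ℝ) = k * (2 * n ^ (T - 1)) := by
    rw [Finset.sum_comm]
    simp only [Finset.sum_add_distrib, sum_ite_apply_eq, Fintype.card_fin, Finset.sum_const,
      Finset.card_univ, nsmul_eq_mul]
    ring
  calc _ ≤ ∑ ξ : Fin T → Fin n, (‖a ξ - b ξ‖ + 2 * L * c / k * ∑ j : Fin k,
        ((if ξ ⟨k, hkT⟩ = i₀ then 1 else 0) +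
          (if ξ (Fin.castLE hkT.le j) = i₀ then 1 else 0))) := by
        gcongr with ξ
        refine (norm_pairwiseSgdStep_sub_le hβ hconv hdiff hsmooth hL hc₀ hc hk
          _ _ _ _ _ _).trans ?_
        gcongr with j
        exact ite_and_le_ite_add_ite hSS' _ _
    _ = _ := by
        have hk' : (k : ℝ) ≠ 0 := Nat.cast_ne_zero.2 hk
        rw [Finset.sum_add_distrib, ← Finset.mul_sum, hcount]
        field_simp
        ring

end PairwiseSGD

/-- **Theorem 9 (last iterate).** Random uniform stability of pairwise-SGD with convex,
`β`-smooth, `L`-Lipschitz losses and step sizes `α_t ≤ 2/β`, under the random selection rule: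
`E_ξ |ℓ(w_T, z, z') − ℓ(w'_T, z, z')| ≤ (4L²/n)·Σ_{t=1}^{T−1} α_t`. -/
theorem pairwise_sgd_stability_convex_last_iterate
    {Z : Type*} (d : ℕ) (n T : ℕ) (hT : 1 ≤ T)
    (ℓ : EuclideanSpace ℝ (Fin d) → Z → Z → ℝ)
    (g : EuclideanSpace ℝ (Fin d) → Z → Z → EuclideanSpace ℝ (Fin d)) (L β : ℝ) (hβ : 0 < β)
    (hconv : ∀ z z' : Z, ConvexOn ℝ Set.univ fun u => ℓ u z z')
    (hdiff : ∀ (v : EuclideanSpace ℝ (Fin d)) (z z' : Z),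
      HasGradientAt (fun u => ℓ u z z') (g v z z') v)
    (hsmooth : ∀ (z z' : Z) (u v : EuclideanSpace ℝ (Fin d)),
      ‖g u z z' - g v z z'‖ ≤ β * ‖u - v‖)
    (hL : ∀ (v : EuclideanSpace ℝ (Fin d)) (z z' : Z), ‖g v z z'‖ ≤ L)
    (S S' : Fin n → Z) (i₀ : Fin n) (hSS' : ∀ i, i ≠ i₀ → S i = S' i)
    (α : ℕ → ℝ) (hα : ∀ s, 0 ≤ α s) (hα2 : ∀ s, α s ≤ 2 / β)
    (w w' : (Fin T → Fin n) → ℕ → EuclideanSpace ℝ (Fin d))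
    (hw1 : ∀ ξ, w ξ 1 = 0) (hw1' : ∀ ξ, w' ξ 1 = 0)
    (hrec : ∀ (ξ : Fin T → Fin n) (s : ℕ) (hs2 : 2 ≤ s) (hsT : s ≤ T),
      w ξ s = w ξ (s - 1) - (α (s - 1) / ((s : ℝ) - 1)) •
        ∑ j : Fin (s - 1), g (w ξ (s - 1)) (S (ξ ⟨s - 1, by omega⟩))
          (S (ξ ⟨(j : ℕ), lt_of_lt_of_le j.isLt (by omega)⟩)))
    (hrec' : ∀ (ξ : Fin T → Fin n) (s : ℕ) (hs2 : 2 ≤ s) (hsT : s ≤ T),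
      w' ξ s = w' ξ (s - 1) - (α (s - 1) / ((s : ℝ) - 1)) •
        ∑ j : Fin (s - 1), g (w' ξ (s - 1)) (S' (ξ ⟨s - 1, by omega⟩))
          (S' (ξ ⟨(j : ℕ), lt_of_lt_of_le j.isLt (by omega)⟩))) :
    ∀ z z' : Z,
      (1 / (n : ℝ) ^ T) * ∑ ξ : Fin T → Fin n, |ℓ (w ξ T) z z' - ℓ (w' ξ T) z z'| ≤
        (4 * L ^ 2 / (n : ℝ)) * ∑ s ∈ Finset.Icc 1 (T - 1), α s := by
  intro z z'
  have hn : (0 : ℝ) < n := Nat.cast_pos.2 i₀.pos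
  have hL₀ : 0 ≤ L := (norm_nonneg _).trans (hL 0 z z')
  have hw : ∀ ξ k (hkT : k < T), 1 ≤ k →
      w ξ (k + 1) = pairwiseSgdStep g (α k) (S (ξ ⟨k, hkT⟩)) (S ∘ ξ ∘ Fin.castLE hkT.le) (w ξ k) ∧
      w' ξ (k + 1) =
        pairwiseSgdStep g (α k) (S' (ξ ⟨k, hkT⟩)) (S' ∘ ξ ∘ Fin.castLE hkT.le) (w' ξ k) := by
    intro ξ k hkT hk
    rw [hrec ξ (k + 1) (by omega) hkT, hrec' ξ (k + 1) (by omega) hkT]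
    simp only [pairwiseSgdStep, Nat.cast_succ, add_sub_cancel_right]
    exact ⟨rfl, rfl⟩
  have hdist := le_add_sum_Icc_of_le_add (a := fun s => ∑ ξ, ‖w ξ s - w' ξ s‖)
    (b := fun k => 4 * L * α k * n ^ (T - 1)) hT fun k hk hkT => by
      simp only [(hw _ k hkT hk).1, (hw _ k hkT hk).2]
      exact sum_norm_pairwiseSgdStep_sub_le hβ hconv hdiff hsmooth hL (hα k) (hα2 k)
        (by omega) hkT hSS' _ _
  simp only [hw1, hw1', sub_zero, norm_zero, Finset.sum_const_zero, zero_add,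
    ← Finset.sum_mul, ← Finset.mul_sum] at hdist
  calc (1 / (n : ℝ) ^ T) * ∑ ξ : Fin T → Fin n, |ℓ (w ξ T) z z' - ℓ (w' ξ T) z z'|
      ≤ (1 / (n : ℝ) ^ T) * (L * ∑ ξ : Fin T → Fin n, ‖w ξ T - w' ξ T‖) := by
        rw [Finset.mul_sum _ _ L]
        gcongr
        exact abs_sub_le_of_norm_gradient_le (fun v => hdiff v z z') (fun v => hL v z z') _ _
    _ ≤ (1 / (n : ℝ) ^ T) * (L * (4 * L * (∑ s ∈ Finset.Icc 1 (T - 1), α s) * n ^ (T - 1))) := by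
        gcongr
    _ = (4 * L ^ 2 / (n : ℝ)) * ∑ s ∈ Finset.Icc 1 (T - 1), α s := by
        rw [show (n : ℝ) ^ T = n * n ^ (T - 1) by rw [← pow_succ', Nat.sub_add_cancel hT]]
        field_simp
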